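/- Forward direction of Younsi's theorem on fingerprints of rational lemniscates. Let n ≥ 1, let P₁, P₂ ∈ ℂ[X] be coprime polynomials with deg P₁ = n and deg P₂ < n (so that R = P₁/P₂ is a rational function of degree n with R(∞) = ∞), and set Γ = {z ∈ ℂ : |P₁(z)| = |P₂(z)|} (the lemniscate L_R(1)). Suppose (φ₋, φ₊) is a conformal parametrization pair for Γ, every root of P₁ lies in Ω₋ = φ₋(𝔻), and every root of P₂ lies in Ω₊ = φ₊({w : |w| > 1}). Then: (i) there exist b_1, …, b_n ∈ 𝔻 and λ with |λ| = 1 such that P₁(φ₋(z))·∏_{k=1}^n (1 − conj(b_k)·z) = λ·P₂(φ₋(z))·∏_{k=1}^n (z − b_k) for all |z| ≤ 1, i.e. R∘φ₋ agrees on the closed unit disk with a finite Blaschke product B of degree n; (ii) there exist a_1, …, a_n ∈ 𝔻, with a_j = 0 for at least one index j, and μ with |μ| = 1, such that P₁(φ₊(w))·∏_{k=1}^n (1 − conj(a_k)·w) = μ·P₂(φ₊(w))·∏_{k=1}^n (w − a_k) for all |w| ≥ 1, i.e. R∘φ₊ agrees on {|w| ≥ 1} with a finite Blaschke product A of degree n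 satisfying A(∞) = ∞. Consequently the fingerprint k of Γ, determined by φ₊(k(z)) = φ₋(z) for z ∈ 𝕋, satisfies the functional equation A(k(z)) = B(z) for all z ∈ 𝕋. -/

import Mathlib

/-!
The zeros `ζᵢ` of `P₁ ∘ φ₋` in the disk are simple, because an injective holomorphic map has
nonvanishing derivative, and `P₂ ∘ φ₋` has no zeros on the closed disk. Hence the quotient
`(P₁ ∘ φ₋) · ∏ (1 - conj ζᵢ z) / ((P₂ ∘ φ₋) · ∏ (z - ζᵢ))` is holomorphic and zero-free on the
closed disk and unimodular on the circle, where `|P₁| = |P₂|`; the maximum principle, applied to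
it and to its inverse, makes it a unimodular constant. The exterior is treated the same way in the
coordinate `z = 1/w`, with `z ^ n P₂ (φ₊ (1/z))` and `z ^ n P₁ (φ₊ (1/z))` in place of `P₁ ∘ φ₋`
and `P₂ ∘ φ₋`: since `φ₊` has a simple pole at `∞`, the second is zero-free and the first
vanishes, besides at the reciprocals of the preimages of the roots of `P₂`, to order
`n - deg P₂ ≥ 1` at `0`. Comparing the two resulting expressions for `P₁ / P₂` on `Γ` gives the
fingerprint equation.
-/

open Complex Metric Set Polynomial

structure ConformalPair (Γ : Set ℂ) (φm φp : ℂ → ℂ) : Prop where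
  contm : ContinuousOn φm (closedBall 0 1)
  injm : InjOn φm (closedBall 0 1)
  holm : DifferentiableOn ℂ φm (ball 0 1)
  mapm : φm '' (sphere 0 1) = Γ
  contp : ContinuousOn φp {w : ℂ | 1 ≤ ‖w‖}
  injp : InjOn φp {w : ℂ | 1 ≤ ‖w‖}
  holp : DifferentiableOn ℂ φp {w : ℂ | 1 < ‖w‖}
  mapp : φp '' (sphere 0 1) = Γ
  deriv_infty : ∃ d : ℝ, 0 < d ∧
    Filter.Tendsto (fun w => φp w / w) (Bornology.cobounded ℂ) (nhds (d : ℂ))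
  disj_mp : Disjoint (φm '' ball 0 1) (φp '' {w : ℂ | 1 < ‖w‖})
  disj_mG : Disjoint (φm '' ball 0 1) Γ
  disj_pG : Disjoint (φp '' {w : ℂ | 1 < ‖w‖}) Γ
  union_eq : φm '' ball 0 1 ∪ Γ ∪ φp '' {w : ℂ | 1 < ‖w‖} = univ

open Filter Topology ComplexConjugate

theorem AnalyticAt.exists_pow_eq {h : ℂ → ℂ} {z₀ : ℂ} (hh : AnalyticAt ℂ h z₀) (h₀ : h z₀ ≠ 0)
    {k : ℕ} (hk : k ≠ 0) : ∃ ρ : ℂ → ℂ, AnalyticAt ℂ ρ z₀ ∧ ∀ z, ρ z ^ k = h z := by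
  refine ⟨fun z => h z₀ ^ (k⁻¹ : ℂ) * (h z / h z₀) ^ (k⁻¹ : ℂ), ?_, fun z => ?_⟩
  · refine analyticAt_const.mul ((hh.div analyticAt_const h₀).cpow analyticAt_const ?_)
    simp [div_self h₀]
  · rw [mul_pow, cpow_nat_inv_pow _ hk, cpow_nat_inv_pow _ hk]
    field_simp

theorem exists_ne_pow_eq_pow {ψ : ℂ → ℂ} {z₀ : ℂ} {k : ℕ} (hk : 1 < k)
    (hψ : 𝓝 0 ≤ map ψ (𝓝 z₀)) {W : Set ℂ} (hW : W ∈ 𝓝 z₀) :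
    ∃ z₁ ∈ W, ∃ z₂ ∈ W, z₁ ≠ z₂ ∧ ψ z₁ ^ k = ψ z₂ ^ k := by
  have hω := Complex.isPrimitiveRoot_exp k (by omega)
  set ω := cexp (2 * Real.pi * I / k)
  have hV : ψ '' W ∈ 𝓝 0 := hψ (image_mem_map hW)
  have hωV : (ω * ·) ⁻¹' (ψ '' W) ∈ 𝓝 0 :=
    (continuous_const_mul ω).continuousAt.preimage_mem_nhds (by simpa using hV)
  obtain ⟨w, hw₀, ⟨z₁, hz₁, rfl⟩, z₂, hz₂, hz₂ω⟩ :=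
    Filter.nonempty_of_mem (inter_mem_nhdsWithin {(0 : ℂ)}ᶜ (inter_mem hV hωV))
  refine ⟨z₁, hz₁, z₂, hz₂, ?_, ?_⟩
  · rintro rfl
    have : (ω - 1) * ψ z₁ = 0 := by linear_combination -hz₂ω
    rcases mul_eq_zero.1 this with h | h
    · exact hω.ne_one hk (sub_eq_zero.1 h)
    · exact hw₀ h
  · rw [hz₂ω, mul_pow, hω.pow_eq_one, one_mul]

theorem Set.InjOn.deriv_ne_zero {f : ℂ → ℂ} {U : Set ℂ} (hinj : InjOn f U) (hU : IsOpen U)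
    (hf : DifferentiableOn ℂ f U) {z₀ : ℂ} (hz₀ : z₀ ∈ U) : deriv f z₀ ≠ 0 := by
  intro hderiv
  have hUz : U ∈ 𝓝 z₀ := hU.mem_nhds hz₀
  have hg : AnalyticAt ℂ (fun z => f z - f z₀) z₀ := (hf.analyticAt hUz).sub analyticAt_const
  have hnot : ¬ ∀ᶠ z in 𝓝 z₀, f z - f z₀ = 0 := by
    intro hev
    have : ∀ᶠ z in 𝓝[≠] z₀, (f z - f z₀ = 0 ∧ z ∈ U) ∧ z ≠ z₀ :=
      ((hev.and hUz).filter_mono nhdsWithin_le_nhds).and self_mem_nhdsWithin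
    obtain ⟨z, ⟨hz, hzU⟩, hne⟩ := this.exists
    exact hne (hinj hzU hz₀ (sub_eq_zero.1 hz))
  obtain ⟨k, hk⟩ : ∃ k : ℕ, analyticOrderAt (fun z => f z - f z₀) z₀ = k :=
    (ENat.ne_top_iff_exists.1 (mt analyticOrderAt_eq_top.1 hnot)).imp fun _ h => h.symm
  -- a vanishing derivative makes the zero of `f - f z₀` at least double
  have hk₂ : 2 ≤ k := by
    have : ((2 : ℕ) : ℕ∞) ≤ analyticOrderAt (fun z => f z - f z₀) z₀ := by
      refine (natCast_le_analyticOrderAt_iff_iteratedDeriv_eq_zero hg).2 fun i hi => ?_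
      interval_cases i
      · simp
      · simpa [iteratedDeriv_one] using hderiv
    exact_mod_cast hk ▸ this
  obtain ⟨h, hh, hh₀, hfh⟩ := hg.analyticOrderAt_eq_natCast.1 hk
  obtain ⟨ρ, hρ, hρk⟩ := hh.exists_pow_eq hh₀ (show k ≠ 0 by omega)
  -- near `z₀`, `f - f z₀ = ψ ^ k` with `ψ` open at `z₀`, so `f` is at least `k`-to-one there
  set ψ : ℂ → ℂ := fun z => (z - z₀) * ρ z
  have hfψ : ∀ᶠ z in 𝓝 z₀, f z - f z₀ = ψ z ^ k :=
    hfh.mono fun z hz => by rw [hz, smul_eq_mul, mul_pow, hρk]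
  have hψ₀ : ψ z₀ = 0 := by simp [ψ]
  have hψ : 𝓝 0 ≤ map ψ (𝓝 z₀) := by
    have hψa : AnalyticAt ℂ ψ z₀ := (analyticAt_id.sub analyticAt_const).mul hρ
    rcases hψa.eventually_constant_or_nhds_le_map_nhds with hc | hle
    · refine absurd ?_ hnot
      filter_upwards [hc, hfψ] with z hz hfz
      rw [hfz, hz, hψ₀, zero_pow (by omega)]
    · rwa [hψ₀] at hle
  obtain ⟨z₁, ⟨hz₁U, hz₁⟩, z₂, ⟨hz₂U, hz₂⟩, hne, heq⟩ :=
    exists_ne_pow_eq_pow (show 1 < k by omega) hψ (inter_mem hUz hfψ)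
  have hz₁' : f z₁ - f z₀ = ψ z₁ ^ k := hz₁
  have hz₂' : f z₂ - f z₀ = ψ z₂ ^ k := hz₂
  exact hne (hinj hz₁U hz₂U (by linear_combination hz₁' - hz₂' + heq))

theorem Set.InjOn.dslope_ne_zero {f : ℂ → ℂ} {s U : Set ℂ} (hinj : InjOn f s) (hU : IsOpen U)
    (hUs : U ⊆ s) (hf : DifferentiableOn ℂ f U) {a z : ℂ} (ha : a ∈ U) (hz : z ∈ s) :
    dslope f a z ≠ 0 := by
  rcases eq_or_ne z a with rfl | hne
  · rw [dslope_same]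
    exact (hinj.mono hUs).deriv_ne_zero hU hf ha
  · rw [dslope_of_ne _ hne, slope_def_field]
    exact div_ne_zero (sub_ne_zero.2 fun h => hne (hinj hz (hUs ha) h)) (sub_ne_zero.2 hne)

section DiffContOnCl

variable {𝕜 : Type*} [NontriviallyNormedField 𝕜] {s : Set 𝕜}

theorem DiffContOnCl.mul {f g : 𝕜 → 𝕜} (hf : DiffContOnCl 𝕜 f s) (hg : DiffContOnCl 𝕜 g s) :
    DiffContOnCl 𝕜 (fun x => f x * g x) s :=
  ⟨hf.1.mul hg.1, hf.2.mul hg.2⟩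

theorem DiffContOnCl.finset_prod {ι : Type*} {t : Finset ι} {f : ι → 𝕜 → 𝕜}
    (hf : ∀ i ∈ t, DiffContOnCl 𝕜 (f i) s) : DiffContOnCl 𝕜 (fun x => ∏ i ∈ t, f i x) s :=
  ⟨DifferentiableOn.fun_finsetProd fun i hi => (hf i hi).1,
    continuousOn_finsetProd t fun i hi => (hf i hi).2⟩

end DiffContOnCl

theorem DiffContOnCl.dslope {f : ℂ → ℂ} {U : Set ℂ} (hf : DiffContOnCl ℂ f U) (hU : IsOpen U)
    {a : ℂ} (ha : a ∈ U) : DiffContOnCl ℂ (dslope f a) U where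
  differentiableOn := (differentiableOn_dslope (hU.mem_nhds ha)).2 hf.differentiableOn
  continuousOn z hz := by
    rcases eq_or_ne z a with rfl | hne
    · exact (continuousAt_dslope_same.2 (hf.differentiableAt hU ha)).continuousWithinAt
    · exact (continuousWithinAt_dslope_of_ne hne).2 (hf.continuousOn z hz)

theorem diffContOnCl_update_zero {f : ℂ → ℂ} {c : ℂ}
    (hd : DifferentiableOn ℂ f (ball 0 1 \ {0})) (hc : ContinuousOn f (closedBall 0 1 \ {0}))
    (hlim : Tendsto f (𝓝[≠] 0) (𝓝 c)) : DiffContOnCl ℂ (Function.update f 0 c) (ball 0 1) := by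
  have hcont : ContinuousOn (Function.update f 0 c) (closedBall 0 1) :=
    continuousOn_update_iff.2 ⟨hc, fun _ => hlim.mono_left (nhdsWithin_mono _ fun z hz => hz.2)⟩
  refine .mk_ball ((differentiableOn_compl_singleton_and_continuousAt_iff
    (ball_mem_nhds 0 one_pos)).1 ⟨?_, hcont.continuousAt (closedBall_mem_nhds 0 one_pos)⟩) hcont
  exact hd.congr fun z hz => Function.update_of_ne hz.2 _ _

theorem exists_eqOn_closedBall_of_norm_eq_one {H : ℂ → ℂ} (hH : DiffContOnCl ℂ H (ball 0 1))
    (h₀ : ∀ z ∈ closedBall (0 : ℂ) 1, H z ≠ 0) (h₁ : ∀ z ∈ sphere (0 : ℂ) 1, ‖H z‖ = 1) :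
    ∃ lam : ℂ, ‖lam‖ = 1 ∧ ∀ z ∈ closedBall (0 : ℂ) 1, H z = lam := by
  have hmax : ∀ {F : ℂ → ℂ}, DiffContOnCl ℂ F (ball 0 1) → (∀ z ∈ sphere (0 : ℂ) 1, ‖F z‖ ≤ 1) →
      ∀ z ∈ closedBall (0 : ℂ) 1, ‖F z‖ ≤ 1 := fun hF hb z hz =>
    norm_le_of_forall_mem_frontier_norm_le isBounded_ball hF
      (by rwa [frontier_ball 0 one_ne_zero]) (by rwa [closure_ball 0 one_ne_zero])
  -- the maximum principle applies to `H` and, `H` being zero-free, to `H⁻¹`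
  have hnorm : ∀ z ∈ closedBall (0 : ℂ) 1, ‖H z‖ = 1 := by
    intro z hz
    have hinv := hmax (hH.inv (by rwa [closure_ball 0 one_ne_zero])) (by simp_all) z hz
    rw [Pi.inv_apply, norm_inv, inv_le_one₀ (norm_pos_iff.2 (h₀ z hz))] at hinv
    exact le_antisymm (hmax hH (fun w hw => (h₁ w hw).le) z hz) hinv
  have h0 : (0 : ℂ) ∈ closedBall (0 : ℂ) 1 := mem_closedBall_self zero_le_one
  refine ⟨H 0, hnorm 0 h0, fun z hz => eqOn_closedBall_of_isMaxOn_norm hH (fun w hw => ?_) hz⟩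
  simp [hnorm w (ball_subset_closedBall hw), hnorm 0 h0]

theorem norm_one_sub_conj_mul_eq {z b : ℂ} (hz : ‖z‖ = 1) : ‖1 - conj b * z‖ = ‖z - b‖ := by
  calc ‖1 - conj b * z‖ = ‖z * conj (z - b)‖ := by
        rw [map_sub, mul_sub, mul_conj', hz]; push_cast; ring_nf
    _ = ‖z - b‖ := by rw [norm_mul, hz, one_mul, RCLike.norm_conj]

theorem one_sub_conj_mul_ne_zero {z b : ℂ} (hb : ‖b‖ < 1) (hz : ‖z‖ ≤ 1) :
    1 - conj b * z ≠ 0 := by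
  rw [sub_ne_zero]
  intro h
  have := congrArg norm h
  rw [norm_one, norm_mul, RCLike.norm_conj] at this
  nlinarith [norm_nonneg z, norm_nonneg b]

theorem exists_blaschke_of_norm_eq_on_sphere {ι : Type*} [Fintype ι] {f : ι → ℂ → ℂ}
    {ζ : ι → ℂ} {c : ℂ} {G : ℂ → ℂ} (hf : ∀ i, DiffContOnCl ℂ (f i) (ball 0 1))
    (hζ : ∀ i, ‖ζ i‖ < 1) (hfζ : ∀ i, f i (ζ i) = 0)
    (hdslope : ∀ i, ∀ z ∈ closedBall (0 : ℂ) 1, dslope (f i) (ζ i) z ≠ 0)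
    (hG : DiffContOnCl ℂ G (ball 0 1)) (hG₀ : ∀ z ∈ closedBall (0 : ℂ) 1, G z ≠ 0)
    (hnorm : ∀ z ∈ sphere (0 : ℂ) 1, ‖c * ∏ i, f i z‖ = ‖G z‖) :
    ∃ lam : ℂ, ‖lam‖ = 1 ∧ ∀ z : ℂ, ‖z‖ ≤ 1 →
      c * (∏ i, f i z) * ∏ i, (1 - conj (ζ i) * z) = lam * (G z * ∏ i, (z - ζ i)) := by
  have hfactor : ∀ i z, f i z = (z - ζ i) * dslope (f i) (ζ i) z := fun i z =>
    (sub_smul_dslope_of_zero (hfζ i) z).symm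
  have h1 : (1 : ℂ) ∈ sphere (0 : ℂ) 1 := by simp
  have hc : c ≠ 0 := by
    rintro rfl
    exact hG₀ 1 (sphere_subset_closedBall h1) (norm_eq_zero.1 (by simpa using (hnorm 1 h1).symm))
  set H : ℂ → ℂ := fun z =>
    c * (∏ i, dslope (f i) (ζ i) z) * (∏ i, (1 - conj (ζ i) * z)) * (G z)⁻¹
  have hHd : DiffContOnCl ℂ H (ball 0 1) :=
    ((diffContOnCl_const.mul (.finset_prod fun i _ => (hf i).dslope isOpen_ball
      (mem_ball_zero_iff.2 (hζ i)))).mul (.finset_prod fun i _ =>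
        (diffContOnCl_const.sub (diffContOnCl_const.mul (differentiable_id.diffContOnCl))))).mul
      (hG.inv (by rwa [closure_ball 0 one_ne_zero]))
  have hH₀ : ∀ z ∈ closedBall (0 : ℂ) 1, H z ≠ 0 := fun z hz =>
    mul_ne_zero (mul_ne_zero (mul_ne_zero hc (Finset.prod_ne_zero_iff.2 fun i _ => hdslope i z hz))
      (Finset.prod_ne_zero_iff.2 fun i _ =>
        one_sub_conj_mul_ne_zero (hζ i) (mem_closedBall_zero_iff.1 hz)))
      (inv_ne_zero (hG₀ z hz))
  have hH₁ : ∀ z ∈ sphere (0 : ℂ) 1, ‖H z‖ = 1 := by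
    intro z hz
    have hz₁ : ‖z‖ = 1 := mem_sphere_zero_iff_norm.1 hz
    have hGz : ‖G z‖ ≠ 0 := norm_ne_zero_iff.2 (hG₀ z (sphere_subset_closedBall hz))
    have := hnorm z hz
    simp only [hfactor, Finset.prod_mul_distrib, norm_mul, norm_prod] at this
    simp only [H, norm_mul, norm_prod, norm_inv, norm_one_sub_conj_mul_eq hz₁]
    rw [mul_inv_eq_one₀ hGz, ← this]
    ring
  obtain ⟨lam, hlam, hHlam⟩ := exists_eqOn_closedBall_of_norm_eq_one hHd hH₀ hH₁
  refine ⟨lam, hlam, fun z hz => ?_⟩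
  have hz' : z ∈ closedBall (0 : ℂ) 1 := mem_closedBall_zero_iff.2 hz
  rw [← hHlam z hz']
  simp only [H, hfactor, Finset.prod_mul_distrib]
  field_simp [hG₀ z hz']

theorem Polynomial.exists_eval_eq_leadingCoeff_mul_prod (P : ℂ[X]) :
    ∃ r : Fin P.natDegree → ℂ, ∀ x, P.eval x = P.leadingCoeff * ∏ i, (x - r i) := by
  set L := P.roots.toList
  have hlen : L.length = P.natDegree := by
    simp [L, IsAlgClosed.card_roots_eq_natDegree]
  refine ⟨fun i => L[(finCongr hlen.symm i : ℕ)], fun x => ?_⟩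
  conv_lhs =>
    rw [← C_leadingCoeff_mul_prod_multiset_X_sub_C (p := P) IsAlgClosed.card_roots_eq_natDegree]
  rw [(finCongr hlen.symm).prod_comp (fun i : Fin L.length => x - L[(i : ℕ)]),
    Fin.prod_univ_fun_getElem L (x - ·)]
  simp [eval_multiset_prod, L]

theorem Polynomial.eval_eq_zero_of_eval_eq_prod {P : ℂ[X]} {k : ℕ} {r : Fin k → ℂ}
    (hr : ∀ x, P.eval x = P.leadingCoeff * ∏ i, (x - r i)) (i : Fin k) : P.eval (r i) = 0 := by
  rw [hr]
  exact mul_eq_zero_of_right _ (Finset.prod_eq_zero (Finset.mem_univ i) (sub_self _))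

theorem exists_blaschke_eval_comp_of_injOn_closedBall {φ : ℂ → ℂ} {P₁ P₂ : ℂ[X]}
    (hc : ContinuousOn φ (closedBall 0 1)) (hinj : InjOn φ (closedBall 0 1))
    (hd : DifferentiableOn ℂ φ (ball 0 1)) (hroots : ∀ z, P₁.eval z = 0 → z ∈ φ '' ball 0 1)
    (hP₂ : ∀ z ∈ closedBall (0 : ℂ) 1, P₂.eval (φ z) ≠ 0)
    (hΓ : ∀ z ∈ sphere (0 : ℂ) 1, ‖P₁.eval (φ z)‖ = ‖P₂.eval (φ z)‖) :
    ∃ (b : Fin P₁.natDegree → ℂ) (lam : ℂ), (∀ i, ‖b i‖ < 1) ∧ ‖lam‖ = 1 ∧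
      ∀ z : ℂ, ‖z‖ ≤ 1 →
        P₁.eval (φ z) * ∏ i, (1 - conj (b i) * z) = lam * (P₂.eval (φ z) * ∏ i, (z - b i)) := by
  obtain ⟨r, hr⟩ := P₁.exists_eval_eq_leadingCoeff_mul_prod
  choose ζ hζ hζr using fun i => hroots (r i) (eval_eq_zero_of_eval_eq_prod hr i)
  have hφ : DiffContOnCl ℂ φ (ball 0 1) := .mk_ball hd hc
  have hdslope : ∀ i, ∀ z ∈ closedBall (0 : ℂ) 1, dslope (fun z => φ z - r i) (ζ i) z ≠ 0 :=
    fun i z hz => Set.InjOn.dslope_ne_zero (fun x hx y hy h => hinj hx hy (sub_left_inj.1 h))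
      isOpen_ball ball_subset_closedBall (hd.sub_const _) (hζ i) hz
  obtain ⟨lam, hlam, hB⟩ := exists_blaschke_of_norm_eq_on_sphere (fun i => hφ.sub_const (r i))
    (fun i => mem_ball_zero_iff.1 (hζ i)) (fun i => sub_eq_zero.2 (hζr i)) hdslope
    (P₂.differentiable.comp_diffContOnCl hφ) hP₂ (fun z hz => by rw [← hr]; exact hΓ z hz)
  exact ⟨ζ, lam, fun i => mem_ball_zero_iff.1 (hζ i), hlam, fun z hz => by
    simpa only [← hr, Function.comp_apply] using hB z hz⟩

theorem one_le_norm_inv {𝕜 : Type*} [NormedDivisionRing 𝕜] {z : 𝕜} (hz₀ : z ≠ 0)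
    (hz : ‖z‖ ≤ 1) : 1 ≤ ‖z⁻¹‖ := by
  rw [norm_inv]
  exact (one_le_inv₀ (norm_pos_iff.2 hz₀)).2 hz

theorem Polynomial.leadingCoeff_mul_prod_mul_sub_mul {P : ℂ[X]} {k : ℕ} {r : Fin k → ℂ}
    (hr : ∀ x, P.eval x = P.leadingCoeff * ∏ i, (x - r i)) (z x : ℂ) :
    P.leadingCoeff * ∏ i, (z * x - z * r i) = z ^ k * P.eval x := by
  simp only [← mul_sub, Finset.prod_mul_distrib, Finset.prod_const, Finset.card_univ,
    Fintype.card_fin, hr]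
  ring

/-- `z ↦ z φ(1/z)`, with the value `d` at `0`: for an exterior map with `φ w ~ d w` at `∞`, this is
`φ` in the coordinate `z = 1/w` with its pole cancelled. -/
noncomputable def invChart (φ : ℂ → ℂ) (d : ℂ) : ℂ → ℂ :=
  Function.update (fun z => z * φ z⁻¹) 0 d

section invChart

variable {φ : ℂ → ℂ} {d : ℂ}

theorem invChart_zero : invChart φ d 0 = d :=
  Function.update_self _ _ _

theorem invChart_of_ne_zero {z : ℂ} (hz : z ≠ 0) : invChart φ d z = z * φ z⁻¹ :=
  Function.update_of_ne hz _ _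

theorem diffContOnCl_invChart (hc : ContinuousOn φ {w | 1 ≤ ‖w‖})
    (hd : DifferentiableOn ℂ φ {w | 1 < ‖w‖})
    (hlim : Tendsto (fun w => φ w / w) (Bornology.cobounded ℂ) (𝓝 d)) :
    DiffContOnCl ℂ (invChart φ d) (ball 0 1) := by
  refine diffContOnCl_update_zero ?_ ?_ ?_
  · refine differentiableOn_id.mul (hd.comp (differentiableOn_id.inv fun z hz => hz.2) ?_)
    intro z ⟨hz, hz₀⟩
    show 1 < ‖z⁻¹‖
    rw [norm_inv]
    exact (one_lt_inv₀ (norm_pos_iff.2 hz₀)).2 (mem_ball_zero_iff.1 hz)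
  · exact continuousOn_id.mul (hc.comp (continuousOn_id.inv₀ fun z hz => hz.2)
      fun z ⟨hz, hz₀⟩ => one_le_norm_inv hz₀ (mem_closedBall_zero_iff.1 hz))
  · refine (hlim.comp tendsto_inv₀_nhdsNE_zero).congr fun z => ?_
    simp [div_inv_eq_mul, mul_comm]

theorem dslope_invChart_sub_mul_ne_zero (hd₀ : d ≠ 0) (hinj : InjOn φ {w | 1 ≤ ‖w‖})
    (hd : DifferentiableOn ℂ φ {w | 1 < ‖w‖}) {η z : ℂ} (hη : 1 < ‖η‖) (hz : ‖z‖ ≤ 1) :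
    dslope (fun z => invChart φ d z - z * φ η) η⁻¹ z ≠ 0 := by
  have hη₀ : η ≠ 0 := norm_pos_iff.1 (one_pos.trans hη)
  have hopen : IsOpen {w : ℂ | 1 < ‖w‖} := isOpen_lt continuous_const continuous_norm
  rcases eq_or_ne z η⁻¹ with rfl | hne
  · have hev : (fun z => invChart φ d z - z * φ η) =ᶠ[𝓝 η⁻¹] fun z => z * (φ z⁻¹ - φ η) :=
      (eventually_ne_nhds (inv_ne_zero hη₀)).mono fun z hz => by
        simp only [invChart_of_ne_zero hz, mul_sub]
    have hφ : HasDerivAt φ (deriv φ η) η⁻¹⁻¹ := by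
      rw [inv_inv]
      exact (hd.differentiableAt (hopen.mem_nhds hη)).hasDerivAt
    have hderiv : HasDerivAt (fun z => z * (φ z⁻¹ - φ η))
        (1 * (φ η⁻¹⁻¹ - φ η) + η⁻¹ * (deriv φ η * -(η⁻¹ ^ 2)⁻¹)) η⁻¹ :=
      (hasDerivAt_id' η⁻¹).mul ((hφ.comp η⁻¹ (hasDerivAt_inv (inv_ne_zero hη₀))).sub_const (φ η))
    rw [dslope_same, hev.deriv_eq, hderiv.deriv, inv_inv, sub_self, mul_zero, zero_add]
    exact mul_ne_zero (inv_ne_zero hη₀) (mul_ne_zero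
      ((hinj.mono fun w (hw : 1 < ‖w‖) => hw.le).deriv_ne_zero hopen hd hη)
      (neg_ne_zero.2 (inv_ne_zero (pow_ne_zero _ (inv_ne_zero hη₀)))))
  · rw [dslope_of_ne _ hne, slope_def_field, invChart_of_ne_zero (inv_ne_zero hη₀), inv_inv,
      sub_self, sub_zero]
    refine div_ne_zero ?_ (sub_ne_zero.2 hne)
    rcases eq_or_ne z 0 with rfl | hz₀
    · simpa [invChart_zero] using hd₀
    · rw [invChart_of_ne_zero hz₀, ← mul_sub]
      refine mul_ne_zero hz₀ (sub_ne_zero.2 fun h => hne ?_)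
      rw [← hinj (one_le_norm_inv hz₀ hz) (show (1 : ℝ) ≤ ‖η‖ from hη.le) h, inv_inv]

theorem leadingCoeff_mul_prod_invChart_sub_mul {P : ℂ[X]} {k : ℕ}
    {r : Fin k → ℂ} (hr : ∀ x, P.eval x = P.leadingCoeff * ∏ i, (x - r i)) {z : ℂ} (hz : z ≠ 0) :
    P.leadingCoeff * ∏ i, (invChart φ d z - z * r i) = z ^ k * P.eval (φ z⁻¹) := by
  simp only [invChart_of_ne_zero hz, leadingCoeff_mul_prod_mul_sub_mul hr]

theorem leadingCoeff_mul_prod_invChart_sub_mul_ne_zero {P : ℂ[X]} {k : ℕ}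
    {r : Fin k → ℂ} (hr : ∀ x, P.eval x = P.leadingCoeff * ∏ i, (x - r i)) (hP : P ≠ 0)
    (hd₀ : d ≠ 0) (hφ : ∀ w : ℂ, 1 ≤ ‖w‖ → P.eval (φ w) ≠ 0) {z : ℂ} (hz : ‖z‖ ≤ 1) :
    P.leadingCoeff * ∏ i, (invChart φ d z - z * r i) ≠ 0 := by
  rcases eq_or_ne z 0 with rfl | hz₀
  · simp only [invChart_zero, zero_mul, sub_zero, Finset.prod_const]
    exact mul_ne_zero (leadingCoeff_ne_zero.2 hP) (pow_ne_zero _ hd₀)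
  · rw [leadingCoeff_mul_prod_invChart_sub_mul hr hz₀]
    exact mul_ne_zero (pow_ne_zero _ hz₀) (hφ _ (one_le_norm_inv hz₀ hz))

theorem leadingCoeff_mul_prod_sumElim_invChart {P : ℂ[X]} {k n : ℕ}
    {r : Fin k → ℂ} (hr : ∀ x, P.eval x = P.leadingCoeff * ∏ i, (x - r i)) (hkn : k ≤ n) {z : ℂ}
    (hz : z ≠ 0) :
    P.leadingCoeff * ∏ x : Fin k ⊕ Fin (n - k),
        Sum.elim (fun i z => invChart φ d z - z * r i) (fun _ z => z) x z =
      z ^ n * P.eval (φ z⁻¹) := by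
  simp only [Fintype.prod_sum_type, Sum.elim_inl, Sum.elim_inr, Finset.prod_const,
    Finset.card_univ, Fintype.card_fin, ← mul_assoc, leadingCoeff_mul_prod_invChart_sub_mul hr hz]
  rw [mul_right_comm, ← pow_add, Nat.add_sub_cancel' hkn]

end invChart

theorem exists_blaschke_eval_comp_inv {φ : ℂ → ℂ} {P₁ P₂ : ℂ[X]} {d : ℂ}
    (hc : ContinuousOn φ {w | 1 ≤ ‖w‖}) (hinj : InjOn φ {w | 1 ≤ ‖w‖})
    (hd : DifferentiableOn ℂ φ {w | 1 < ‖w‖})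
    (hlim : Tendsto (fun w => φ w / w) (Bornology.cobounded ℂ) (𝓝 d)) (hd₀ : d ≠ 0)
    (hroots : ∀ z, P₂.eval z = 0 → z ∈ φ '' {w | 1 < ‖w‖})
    (hP₁ : ∀ w : ℂ, 1 ≤ ‖w‖ → P₁.eval (φ w) ≠ 0)
    (hΓ : ∀ w ∈ sphere (0 : ℂ) 1, ‖P₁.eval (φ w)‖ = ‖P₂.eval (φ w)‖)
    (hdeg : P₂.natDegree < P₁.natDegree) :
    ∃ (ζ : Fin P₂.natDegree ⊕ Fin (P₁.natDegree - P₂.natDegree) → ℂ) (lam : ℂ),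
      (∀ x, ‖ζ x‖ < 1) ∧ (∀ i, ζ (.inr i) = 0) ∧ ‖lam‖ = 1 ∧ ∀ z : ℂ, z ≠ 0 → ‖z‖ ≤ 1 →
        P₂.eval (φ z⁻¹) * ∏ x, (1 - conj (ζ x) * z) = lam * (P₁.eval (φ z⁻¹) * ∏ x, (z - ζ x)) := by
  obtain ⟨r, hr⟩ := P₁.exists_eval_eq_leadingCoeff_mul_prod
  obtain ⟨s, hs⟩ := P₂.exists_eval_eq_leadingCoeff_mul_prod
  choose η hη hηs using fun i => hroots (s i) (eval_eq_zero_of_eval_eq_prod hs i)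
  have hη₀ : ∀ i, η i ≠ 0 := fun i => norm_pos_iff.1 (one_pos.trans (hη i))
  have hχ : DiffContOnCl ℂ (invChart φ d) (ball 0 1) := diffContOnCl_invChart hc hd hlim
  -- `z ^ n * P₂ (φ (1/z))` vanishes at the `1/η i`, and at `0` to order `n - deg P₂`
  set f : Fin P₂.natDegree ⊕ Fin (P₁.natDegree - P₂.natDegree) → ℂ → ℂ :=
    Sum.elim (fun i z => invChart φ d z - z * s i) fun _ z => z
  set ζ : Fin P₂.natDegree ⊕ Fin (P₁.natDegree - P₂.natDegree) → ℂ :=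
    Sum.elim (fun i => (η i)⁻¹) 0
  have hf : ∀ z ≠ 0, P₂.leadingCoeff * ∏ x, f x z = z ^ P₁.natDegree * P₂.eval (φ z⁻¹) :=
    fun z hz => leadingCoeff_mul_prod_sumElim_invChart hs hdeg.le hz
  have hζ : ∀ x, ‖ζ x‖ < 1 := by
    rintro (i | i)
    · simpa [ζ] using inv_lt_one_of_one_lt₀ (hη i)
    · simp [ζ]
  obtain ⟨lam, hlam, hB⟩ := exists_blaschke_of_norm_eq_on_sphere (f := f) (ζ := ζ)
    (c := P₂.leadingCoeff) (G := fun z => P₁.leadingCoeff * ∏ j, (invChart φ d z - z * r j))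
    (by rintro (i | i)
        · exact hχ.sub (differentiable_id.mul_const _).diffContOnCl
        · exact differentiable_id.diffContOnCl)
    hζ
    (by rintro (i | i)
        · simp [f, ζ, invChart_of_ne_zero (inv_ne_zero (hη₀ i)), hηs i]
        · simp [f, ζ])
    (by rintro (i | i) z hz
        · simpa [f, ζ, ← hηs i] using dslope_invChart_sub_mul_ne_zero hd₀ hinj hd (hη i)
            (mem_closedBall_zero_iff.1 hz)
        · exact Set.InjOn.dslope_ne_zero (s := univ) (fun x _ y _ h => h) isOpen_ball
            (subset_univ _) differentiableOn_id (mem_ball_self one_pos) (mem_univ z))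
    (diffContOnCl_const.mul (.finset_prod fun j _ =>
      hχ.sub (differentiable_id.mul_const _).diffContOnCl))
    (fun z hz => leadingCoeff_mul_prod_invChart_sub_mul_ne_zero hr
      (ne_zero_of_natDegree_gt hdeg) hd₀ hP₁ (mem_closedBall_zero_iff.1 hz))
    (fun z hz => by
      have hz₁ : ‖z‖ = 1 := mem_sphere_zero_iff_norm.1 hz
      have hz₀ : z ≠ 0 := ne_zero_of_mem_sphere one_ne_zero ⟨z, hz⟩
      rw [hf z hz₀, leadingCoeff_mul_prod_invChart_sub_mul hr hz₀, norm_mul, norm_mul, norm_pow,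
        hz₁, one_pow, one_mul, one_mul]
      exact (hΓ z⁻¹ (by simp [hz₁])).symm)
  refine ⟨ζ, lam, hζ, fun i => rfl, hlam, fun z hz₀ hz =>
    mul_left_cancel₀ (pow_ne_zero P₁.natDegree hz₀) ?_⟩
  have := hB z hz
  rw [hf z hz₀, leadingCoeff_mul_prod_invChart_sub_mul hr hz₀] at this
  linear_combination this

theorem mul_prod_sub_eq_of_mul_prod_inv {ι : Type*} [Fintype ι] {ζ : ι → ℂ} {p q lam w : ℂ}
    (hw : w ≠ 0) (h : p * ∏ i, (1 - conj (ζ i) * w⁻¹) = lam * (q * ∏ i, (w⁻¹ - ζ i))) :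
    p * ∏ i, (w - conj (ζ i)) = lam * (q * ∏ i, (1 - ζ i * w)) := by
  have h₁ : ∀ b : ℂ, 1 - b * w⁻¹ = w⁻¹ * (w - b) := fun b => by field_simp
  have h₂ : ∀ b : ℂ, w⁻¹ - b = w⁻¹ * (1 - b * w) := fun b => by field_simp
  simp only [h₁, h₂, Finset.prod_mul_distrib, Finset.prod_const] at h
  refine mul_left_cancel₀ (pow_ne_zero (Finset.univ : Finset ι).card (inv_ne_zero hw)) ?_
  linear_combination h

theorem exists_blaschke_eval_comp_of_injOn_exterior {φ : ℂ → ℂ} {P₁ P₂ : ℂ[X]} {d : ℂ}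
    (hc : ContinuousOn φ {w | 1 ≤ ‖w‖}) (hinj : InjOn φ {w | 1 ≤ ‖w‖})
    (hd : DifferentiableOn ℂ φ {w | 1 < ‖w‖})
    (hlim : Tendsto (fun w => φ w / w) (Bornology.cobounded ℂ) (𝓝 d)) (hd₀ : d ≠ 0)
    (hroots : ∀ z, P₂.eval z = 0 → z ∈ φ '' {w | 1 < ‖w‖})
    (hP₁ : ∀ w : ℂ, 1 ≤ ‖w‖ → P₁.eval (φ w) ≠ 0)
    (hΓ : ∀ w ∈ sphere (0 : ℂ) 1, ‖P₁.eval (φ w)‖ = ‖P₂.eval (φ w)‖)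
    (hdeg : P₂.natDegree < P₁.natDegree) :
    ∃ (a : Fin P₁.natDegree → ℂ) (mu : ℂ), (∀ i, ‖a i‖ < 1) ∧ (∃ j, a j = 0) ∧ ‖mu‖ = 1 ∧
      ∀ w : ℂ, 1 ≤ ‖w‖ →
        P₁.eval (φ w) * ∏ i, (1 - conj (a i) * w) = mu * (P₂.eval (φ w) * ∏ i, (w - a i)) := by
  obtain ⟨ζ, lam, hζ, hζ₀, hlam, hB⟩ :=
    exists_blaschke_eval_comp_inv hc hinj hd hlim hd₀ hroots hP₁ hΓ hdeg
  let e : Fin P₂.natDegree ⊕ Fin (P₁.natDegree - P₂.natDegree) ≃ Fin P₁.natDegree :=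
    finSumFinEquiv.trans (finCongr (Nat.add_sub_cancel' hdeg.le))
  refine ⟨fun k => conj (ζ (e.symm k)), lam⁻¹, fun k => by simpa using hζ (e.symm k),
    ⟨e (.inr ⟨0, by omega⟩), by simp [hζ₀]⟩, by simp [hlam], fun w hw => ?_⟩
  have hw₀ : w ≠ 0 := norm_pos_iff.1 (one_pos.trans_le hw)
  have hlam₀ : lam ≠ 0 := norm_pos_iff.1 (by simp [hlam])
  have hBw := hB w⁻¹ (inv_ne_zero hw₀) (by rw [norm_inv]; exact inv_le_one_of_one_le₀ hw)
  rw [inv_inv] at hBw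
  have key := mul_prod_sub_eq_of_mul_prod_inv hw₀ hBw
  simp only [Complex.conj_conj]
  rw [e.symm.prod_comp (fun x => 1 - ζ x * w), e.symm.prod_comp (fun x => w - conj (ζ x)), key,
    inv_mul_cancel_left₀ hlam₀]

theorem mul_div_eq_mul_div_of_mul_eq_mul {K : Type*} [Field K] {p q x y x' y' μ ν : K}
    (hq : q ≠ 0) (hx : x ≠ 0) (hx' : x' ≠ 0) (h : p * x = μ * (q * y))
    (h' : p * x' = ν * (q * y')) : μ * (y / x) = ν * (y' / x') := by
  rw [mul_div_assoc', mul_div_assoc', div_eq_div_iff hx hx']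
  refine mul_left_cancel₀ hq ?_
  linear_combination x * h' - x' * h

namespace ConformalPair

variable {Γ : Set ℂ} {φm φp : ℂ → ℂ}

theorem φm_mem (h : ConformalPair Γ φm φp) {z : ℂ} (hz : z ∈ sphere (0 : ℂ) 1) : φm z ∈ Γ :=
  h.mapm ▸ mem_image_of_mem φm hz

theorem φp_mem (h : ConformalPair Γ φm φp) {w : ℂ} (hw : w ∈ sphere (0 : ℂ) 1) : φp w ∈ Γ :=
  h.mapp ▸ mem_image_of_mem φp hw

theorem φm_notMem_exterior (h : ConformalPair Γ φm φp) {z : ℂ} (hz : ‖z‖ ≤ 1) :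
    φm z ∉ φp '' {w : ℂ | 1 < ‖w‖} := by
  rcases hz.lt_or_eq with hz | hz
  · exact disjoint_left.1 h.disj_mp (mem_image_of_mem φm (mem_ball_zero_iff.2 hz))
  · exact disjoint_right.1 h.disj_pG (h.φm_mem (mem_sphere_zero_iff_norm.2 hz))

theorem φp_notMem_interior (h : ConformalPair Γ φm φp) {w : ℂ} (hw : 1 ≤ ‖w‖) :
    φp w ∉ φm '' ball 0 1 := by
  rcases hw.lt_or_eq with hw | hw
  · exact disjoint_right.1 h.disj_mp (mem_image_of_mem φp hw)
  · exact disjoint_right.1 h.disj_mG (h.φp_mem (mem_sphere_zero_iff_norm.2 hw.symm))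

end ConformalPair

theorem younsi_forward_general (n : ℕ) (P₁ P₂ : ℂ[X])
    (hdeg1 : P₁.natDegree = n) (hdeg2 : P₂.natDegree < n)
    (φm φp : ℂ → ℂ)
    (hpair : ConformalPair {z : ℂ | ‖P₁.eval z‖ = ‖P₂.eval z‖} φm φp)
    (hroots1 : ∀ z : ℂ, P₁.eval z = 0 → z ∈ φm '' (ball 0 1))
    (hroots2 : ∀ z : ℂ, P₂.eval z = 0 → z ∈ φp '' {w : ℂ | 1 < ‖w‖}) :
    ∃ (b : Fin n → ℂ) (lam : ℂ) (a : Fin n → ℂ) (mu : ℂ),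
      (∀ i, ‖b i‖ < 1) ∧ ‖lam‖ = 1 ∧
      (∀ z : ℂ, ‖z‖ ≤ 1 →
        P₁.eval (φm z) * ∏ i, (1 - (starRingEnd ℂ) (b i) * z)
          = lam * (P₂.eval (φm z) * ∏ i, (z - b i))) ∧
      (∀ i, ‖a i‖ < 1) ∧ (∃ j, a j = 0) ∧ ‖mu‖ = 1 ∧
      (∀ w : ℂ, 1 ≤ ‖w‖ →
        P₁.eval (φp w) * ∏ i, (1 - (starRingEnd ℂ) (a i) * w)
          = mu * (P₂.eval (φp w) * ∏ i, (w - a i))) ∧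
      (∀ z w : ℂ, ‖z‖ = 1 → ‖w‖ = 1 → φp w = φm z →
        mu * ∏ i, (w - a i) / (1 - (starRingEnd ℂ) (a i) * w)
          = lam * ∏ i, (z - b i) / (1 - (starRingEnd ℂ) (b i) * z)) := by
  subst hdeg1
  obtain ⟨d, hd, hlim⟩ := hpair.deriv_infty
  have hP₂ : ∀ z ∈ closedBall (0 : ℂ) 1, P₂.eval (φm z) ≠ 0 := fun z hz h =>
    hpair.φm_notMem_exterior (mem_closedBall_zero_iff.1 hz) (hroots2 _ h)
  have hP₁ : ∀ w : ℂ, 1 ≤ ‖w‖ → P₁.eval (φp w) ≠ 0 := fun w hw h =>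
    hpair.φp_notMem_interior hw (hroots1 _ h)
  obtain ⟨b, lam, hb, hlam, hB⟩ := exists_blaschke_eval_comp_of_injOn_closedBall hpair.contm
    hpair.injm hpair.holm hroots1 hP₂ fun z hz => hpair.φm_mem hz
  obtain ⟨a, mu, ha, ha₀, hmu, hA⟩ := exists_blaschke_eval_comp_of_injOn_exterior hpair.contp
    hpair.injp hpair.holp hlim (ofReal_ne_zero.2 hd.ne') hroots2 hP₁ (fun w hw => hpair.φp_mem hw)
    hdeg2
  refine ⟨b, lam, a, mu, hb, hlam, hB, ha, ha₀, hmu, hA, fun z w hz hw hzw => ?_⟩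
  rw [Finset.prod_div_distrib, Finset.prod_div_distrib]
  exact mul_div_eq_mul_div_of_mul_eq_mul (hP₂ z (mem_closedBall_zero_iff.2 hz.le))
    (Finset.prod_ne_zero_iff.2 fun i _ => one_sub_conj_mul_ne_zero (ha i) hw.le)
    (Finset.prod_ne_zero_iff.2 fun i _ => one_sub_conj_mul_ne_zero (hb i) hz.le)
    (hzw ▸ hA w hw.ge) (hB z hz.le)

/-- Forward direction of Younsi's theorem on fingerprints of rational
lemniscates: `R∘φ₋` is a finite Blaschke product `B` of degree `n` on the closed
disk, `R∘φ₊` is a finite Blaschke product `A` of degree `n` with `A(∞) = ∞` on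
the closed exterior, and the fingerprint `k` satisfies `A∘k = B` on the circle.
The Blaschke-product identities are stated in cleared-denominator form. -/
theorem younsi_forward (n : ℕ) (hn : 1 ≤ n) (P₁ P₂ : ℂ[X])
    (hcop : IsCoprime P₁ P₂) (hdeg1 : P₁.natDegree = n) (hdeg2 : P₂.natDegree < n)
    (φm φp : ℂ → ℂ)
    (hpair : ConformalPair {z : ℂ | ‖P₁.eval z‖ = ‖P₂.eval z‖} φm φp)
    (hroots1 : ∀ z : ℂ, P₁.eval z = 0 → z ∈ φm '' (ball 0 1))
    (hroots2 : ∀ z : ℂ, P₂.eval z = 0 → z ∈ φp '' {w : ℂ | 1 < ‖w‖}) :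
    ∃ (b : Fin n → ℂ) (lam : ℂ) (a : Fin n → ℂ) (mu : ℂ),
      (∀ i, ‖b i‖ < 1) ∧ ‖lam‖ = 1 ∧
      (∀ z : ℂ, ‖z‖ ≤ 1 →
        P₁.eval (φm z) * ∏ i, (1 - (starRingEnd ℂ) (b i) * z)
          = lam * (P₂.eval (φm z) * ∏ i, (z - b i))) ∧
      (∀ i, ‖a i‖ < 1) ∧ (∃ j, a j = 0) ∧ ‖mu‖ = 1 ∧
      (∀ w : ℂ, 1 ≤ ‖w‖ →
        P₁.eval (φp w) * ∏ i, (1 - (starRingEnd ℂ) (a i) * w)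
          = mu * (P₂.eval (φp w) * ∏ i, (w - a i))) ∧
      (∀ z w : ℂ, ‖z‖ = 1 → ‖w‖ = 1 → φp w = φm z →
        mu * ∏ i, (w - a i) / (1 - (starRingEnd ℂ) (a i) * w)
          = lam * ∏ i, (z - b i) / (1 - (starRingEnd ℂ) (b i) * z)) :=
  younsi_forward_general n P₁ P₂ hdeg1 hdeg2 φm φp hpair hroots1 hroots2
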